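/- Let V be a module over ℤ/2ℤ with a linear map ∂ : V → V satisfying ∂ ∘ ∂ = 0. Let W = ℝ →₀ V be the module of finitely supported functions from ℝ to V, with the linear map ∂̄ : W → W given by (∂̄ w)(λ) = ∂(w(λ)), and let Π₊, Π₋ : W → W be the linear projections defined by (Π₊ w)(λ) = w(λ) if λ ≥ 0 and 0 otherwise, and (Π₋ w)(λ) = w(λ) if λ ≤ 0 and 0 otherwise. Let ι : V → W send v to the function supported at 0 with value v. Suppose A, H : W → W are ℤ/2ℤ-linear maps satisfying Π₊ ∘ (Id + A + H ∘ ∂̄ + ∂̄ ∘ H) ∘ Π₋ = 0. Then for every c ∈ V with ∂c = 0 such that A(ι(c)) lies in the range of ∂̄, the element c lies in the range of ∂. -/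
import Mathlib


/-- Let `(V, d)` be a `ℤ/2ℤ`-module with `d ∘ d = 0`, let `W = ℝ →₀ V` with the
induced differential `dbar (w) (λ) = d (w λ)`, let `Π₊, Π₋` be the projections onto
the parts supported in `λ ≥ 0` resp. `λ ≤ 0`, and let `ι : V → W` send `v` to the
finitely supported function with value `v` at `0`.  If `A, H : W → W` are linear maps
with `Π₊ ∘ (Id + A + H ∘ dbar + dbar ∘ H) ∘ Π₋ = 0`, then every cycle `c ∈ V`
(`d c = 0`) such that `A (ι c)` is in the range of `dbar` lies in the range of `d`. -/
theorem stmt3 (V : Type*) [AddCommGroup V] [Module (ZMod 2) V]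
    (d : V →ₗ[ZMod 2] V) (hd : ∀ v, d (d v) = 0)
    (dbar : (ℝ →₀ V) →ₗ[ZMod 2] (ℝ →₀ V))
    (hdbar : ∀ (w : ℝ →₀ V) (l : ℝ), dbar w l = d (w l))
    (Pplus Pminus : (ℝ →₀ V) →ₗ[ZMod 2] (ℝ →₀ V))
    (hPplus : ∀ (w : ℝ →₀ V) (l : ℝ), Pplus w l = if 0 ≤ l then w l else 0)
    (hPminus : ∀ (w : ℝ →₀ V) (l : ℝ), Pminus w l = if l ≤ 0 then w l else 0)
    (A H : (ℝ →₀ V) →ₗ[ZMod 2] (ℝ →₀ V))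
    (hmain : Pplus ∘ₗ (LinearMap.id + A + H ∘ₗ dbar + dbar ∘ₗ H) ∘ₗ Pminus = 0) :
    ∀ c : V, d c = 0 → (∃ w : ℝ →₀ V, dbar w = A (Finsupp.single 0 c)) →
      ∃ v : V, d v = c := by
  intro c hc ⟨w, hw⟩
  set ι : ℝ →₀ V := Finsupp.single 0 c with hι
  have hPm : Pminus ι = ι := by
    ext l
    rw [hPminus]
    rcases le_or_gt l 0 with h | h
    · simp [h]
    · simp [h.not_ge, hι, Finsupp.single_apply, h.ne]
  have hdι : dbar ι = 0 := by
    ext l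
    rw [hdbar]
    rcases eq_or_ne l 0 with rfl | h
    · simp [hι, hc]
    · simp [hι, Finsupp.single_apply, Ne.symm h]
  have h0 := LinearMap.congr_fun hmain ι
  simp only [LinearMap.coe_comp, Function.comp_apply, LinearMap.zero_apply] at h0
  rw [hPm] at h0
  have h1 : Pplus (ι + A ι + dbar (H ι)) = 0 := by
    simpa [hdι] using h0
  have h2 : Pplus (ι + A ι + dbar (H ι)) 0 = 0 := by rw [h1]; rfl
  rw [hPplus] at h2
  simp only [if_pos le_rfl, Finsupp.add_apply, Finsupp.coe_zero, Pi.zero_apply] at h2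
  rw [hdbar, ← hw, hdbar] at h2
  have hι0 : ι 0 = c := by simp [hι]
  rw [hι0] at h2
  refine ⟨w 0 + H ι 0, ?_⟩
  rw [map_add]
  have : c + (d (w 0) + d (H ι 0)) = 0 := by
    rw [← add_assoc]; exact h2
  have h3 : c = c + (c + (d (w 0) + d (H ι 0))) := by rw [this, add_zero]
  rw [h3, ← add_assoc]
  have hcc : c + c = 0 := by
    have h2' : (2 : ZMod 2) = 0 := by decide
    calc c + c = (2 : ZMod 2) • c := (two_smul _ c).symm
      _ = 0 := by rw [h2', zero_smul]
  rw [hcc, zero_add]
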